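/- arXiv:2303.14467 — 5 statements merged into one kernel-verified Lean document; each statement's English description precedes it below -/
import Mathlib

section
/- Let β ≥ 0 and let S ⊆ V be any subset of vertices. Then the cost of the s–t cut (X, Y) with X = {s} ∪ S in Goldberg's flow network, namely ∑_{v ∈ V∖S} deg(v)/2 + (1/2)·|{e ∈ E : e has exactly one endpoint in S}| + β·|S|, equals m + β·|S| − e[S]. In particular, when S = ∅ the cut cost equals m. -/
open scoped Classical

variable {V : Type*} [Fintype V]

/-- `e[S]`: the number of edges of `G` with both endpoints in `S`. -/
noncomputable def edgeCount (G : SimpleGraph V) (S : Finset V) : ℕ :=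
  (G.edgeFinset.filter (fun e => ∀ v ∈ e, v ∈ S)).card

/-- `d(S) = e[S] / |S|`: the degree density of `S`. -/
noncomputable def density (G : SimpleGraph V) (S : Finset V) : ℝ :=
  (edgeCount G S : ℝ) / (S.card : ℝ)

/-- `deg_S(v)`: the degree of `v` in the subgraph induced by `S`. -/
noncomputable def degIn (G : SimpleGraph V) (S : Finset V) (v : V) : ℕ :=
  (S.filter (fun u => G.Adj v u)).card

lemma aux_sum_deg (G : SimpleGraph V) (S : Finset V) :
    ∑ v ∈ Finset.univ \ S, G.degree v =
      ∑ e ∈ G.edgeFinset,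
        (((Finset.univ \ S).sigma (fun v => Finset.univ.filter (G.Adj v))).filter
          (fun x => s(x.1, x.2) = e)).card := by
  classical
  rw [← Finset.card_eq_sum_card_fiberwise (f := fun x : Σ _ : V, V => s(x.1, x.2))]
  · rw [Finset.card_sigma]
    exact Finset.sum_congr rfl fun v _ => by simp [SimpleGraph.degree, SimpleGraph.neighborFinset]
  · intro x hx
    simp only [Finset.mem_coe, Finset.mem_sigma, Finset.mem_filter, Finset.mem_univ, true_and] at hx
    simp [SimpleGraph.mem_edgeFinset, hx.2]

lemma aux_fiber (G : SimpleGraph V) (S : Finset V) (a b : V) (hab : G.Adj a b) :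
    (((Finset.univ \ S).sigma (fun v => Finset.univ.filter (G.Adj v))).filter
      (fun x => s(x.1, x.2) = s(a, b))).card
    = (if a ∈ S then 0 else 1) + (if b ∈ S then 0 else 1) := by
  classical
  have hne : a ≠ b := hab.ne
  have hset : (((Finset.univ \ S).sigma (fun v => Finset.univ.filter (G.Adj v))).filter
      (fun x => s(x.1, x.2) = s(a, b)))
      = (if a ∈ S then ∅ else {(⟨a, b⟩ : Σ _ : V, V)}) ∪
        (if b ∈ S then ∅ else {(⟨b, a⟩ : Σ _ : V, V)}) := by
    ext ⟨x1, x2⟩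
    simp only [Finset.mem_filter, Finset.mem_sigma, Finset.mem_sdiff, Finset.mem_univ,
      true_and, Finset.mem_union, Sym2.eq_iff]
    constructor
    · rintro ⟨⟨hx1, hadj⟩, (⟨rfl, rfl⟩ | ⟨rfl, rfl⟩)⟩
      · left; simp [hx1]
      · right; simp [hx1]
    · rintro (h | h) <;> split_ifs at h with hs <;>
        simp only [Finset.notMem_empty, Finset.mem_singleton, Sigma.ext_iff,
          heq_eq_eq] at h
      · obtain ⟨rfl, rfl⟩ := h
        exact ⟨⟨hs, hab⟩, Or.inl ⟨rfl, rfl⟩⟩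
      · obtain ⟨rfl, rfl⟩ := h
        exact ⟨⟨hs, hab.symm⟩, Or.inr ⟨rfl, rfl⟩⟩
  rw [hset]
  have hdisj : Disjoint ({(⟨a, b⟩ : Σ _ : V, V)} : Finset (Σ _ : V, V)) {⟨b, a⟩} := by
    simp [Finset.disjoint_singleton, Sigma.ext_iff, hne]
  split_ifs <;> simp_all [Finset.card_union_of_disjoint hdisj]

lemma aux_classify (G : SimpleGraph V) (S : Finset V) (a b : V) (hab : G.Adj a b) :
    ((∀ v ∈ s(a, b), v ∈ S) ↔ (a ∈ S ∧ b ∈ S))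
    ∧ (((∃ v ∈ s(a, b), v ∈ S) ∧ (∃ v ∈ s(a, b), v ∉ S)) ↔
        ((a ∈ S ∧ b ∉ S) ∨ (a ∉ S ∧ b ∈ S)))
    ∧ ((∀ v ∈ s(a, b), v ∉ S) ↔ (a ∉ S ∧ b ∉ S)) := by
  refine ⟨?_, ?_, ?_⟩ <;> simp only [Sym2.mem_iff] <;> constructor
  · intro h; exact ⟨h a (Or.inl rfl), h b (Or.inr rfl)⟩
  · rintro ⟨ha, hb⟩ v (rfl | rfl) <;> assumption
  · rintro ⟨⟨v, (rfl | rfl), hv⟩, ⟨u, (rfl | rfl), hu⟩⟩ <;> tauto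
  · rintro (⟨ha, hb⟩ | ⟨ha, hb⟩)
    · exact ⟨⟨a, Or.inl rfl, ha⟩, ⟨b, Or.inr rfl, hb⟩⟩
    · exact ⟨⟨b, Or.inr rfl, hb⟩, ⟨a, Or.inl rfl, ha⟩⟩
  · intro h; exact ⟨h a (Or.inl rfl), h b (Or.inr rfl)⟩
  · rintro ⟨ha, hb⟩ v (rfl | rfl) <;> assumption

lemma aux_partition (G : SimpleGraph V) (S : Finset V) :
    G.edgeFinset.card =
      (G.edgeFinset.filter (fun e => ∀ v ∈ e, v ∈ S)).card
      + (G.edgeFinset.filter (fun e => (∃ v ∈ e, v ∈ S) ∧ (∃ v ∈ e, v ∉ S))).card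
      + (G.edgeFinset.filter (fun e => ∀ v ∈ e, v ∉ S)).card := by
  classical
  have key : ∀ e ∈ G.edgeFinset, (1 : ℕ) =
      (if (∀ v ∈ e, v ∈ S) then 1 else 0)
      + (if ((∃ v ∈ e, v ∈ S) ∧ (∃ v ∈ e, v ∉ S)) then 1 else 0)
      + (if (∀ v ∈ e, v ∉ S) then 1 else 0) := by
    intro e he
    rw [SimpleGraph.mem_edgeFinset] at he
    induction e with
    | _ a b =>
      obtain ⟨h1, h2, h3⟩ := aux_classify G S a b he
      by_cases ha : a ∈ S <;> by_cases hb : b ∈ S <;>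
        simp [h1, h2, h3, ha, hb]
  calc G.edgeFinset.card = ∑ e ∈ G.edgeFinset, (1 : ℕ) := by
        simp
    _ = ∑ e ∈ G.edgeFinset, ((if (∀ v ∈ e, v ∈ S) then 1 else 0)
          + (if ((∃ v ∈ e, v ∈ S) ∧ (∃ v ∈ e, v ∉ S)) then 1 else 0)
          + (if (∀ v ∈ e, v ∉ S) then 1 else 0)) := Finset.sum_congr rfl key
    _ = _ := by
        rw [Finset.sum_add_distrib, Finset.sum_add_distrib,
          ← Finset.sum_filter, ← Finset.sum_filter, ← Finset.sum_filter]
        simp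

lemma aux_degsum (G : SimpleGraph V) (S : Finset V) :
    ∑ v ∈ Finset.univ \ S, G.degree v =
      (G.edgeFinset.filter (fun e => (∃ v ∈ e, v ∈ S) ∧ (∃ v ∈ e, v ∉ S))).card
      + 2 * (G.edgeFinset.filter (fun e => ∀ v ∈ e, v ∉ S)).card := by
  classical
  rw [aux_sum_deg G S]
  have key : ∀ e ∈ G.edgeFinset,
      (((Finset.univ \ S).sigma (fun v => Finset.univ.filter (G.Adj v))).filter
        (fun x => s(x.1, x.2) = e)).card =
      (if ((∃ v ∈ e, v ∈ S) ∧ (∃ v ∈ e, v ∉ S)) then 1 else 0)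
      + (if (∀ v ∈ e, v ∉ S) then 2 else 0) := by
    intro e he
    rw [SimpleGraph.mem_edgeFinset] at he
    induction e with
    | _ a b =>
      obtain ⟨h1, h2, h3⟩ := aux_classify G S a b he
      rw [aux_fiber G S a b he]
      by_cases ha : a ∈ S <;> by_cases hb : b ∈ S <;>
        simp [h2, h3, ha, hb]
  rw [Finset.sum_congr rfl key, Finset.sum_add_distrib,
    ← Finset.sum_filter, ← Finset.sum_filter]
  simp [mul_comm]


/-- Goldberg's cut-cost identity: for any `S ⊆ V`, the cost of the s–t cut with
`X = {s} ∪ S`, namely `∑_{v ∉ S} deg(v)/2 + (1/2)·#{e with exactly one endpoint in S} + β·|S|`,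
equals `m + β·|S| − e[S]`; in particular for `S = ∅` it equals `m`. -/
theorem goldberg_cut_cost (G : SimpleGraph V) (β : ℝ) (hβ : 0 ≤ β) (S : Finset V) :
    ((∑ v ∈ Finset.univ \ S, (G.degree v : ℝ) / 2)
      + (1 / 2) * ((G.edgeFinset.filter
          (fun e => (∃ v ∈ e, v ∈ S) ∧ (∃ v ∈ e, v ∉ S))).card : ℝ)
      + β * (S.card : ℝ)
    = (G.edgeFinset.card : ℝ) + β * (S.card : ℝ) - (edgeCount G S : ℝ))
    ∧ (S = ∅ →
      (∑ v ∈ Finset.univ \ S, (G.degree v : ℝ) / 2)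
        + (1 / 2) * ((G.edgeFinset.filter
            (fun e => (∃ v ∈ e, v ∈ S) ∧ (∃ v ∈ e, v ∉ S))).card : ℝ)
        + β * (S.card : ℝ)
      = (G.edgeFinset.card : ℝ)) := by
  classical
  have hmain : (∑ v ∈ Finset.univ \ S, (G.degree v : ℝ) / 2)
      + (1 / 2) * ((G.edgeFinset.filter
          (fun e => (∃ v ∈ e, v ∈ S) ∧ (∃ v ∈ e, v ∉ S))).card : ℝ)
      + β * (S.card : ℝ)
    = (G.edgeFinset.card : ℝ) + β * (S.card : ℝ) - (edgeCount G S : ℝ) := by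
    have hsum : ∑ v ∈ Finset.univ \ S, (G.degree v : ℝ) / 2
        = ((∑ v ∈ Finset.univ \ S, G.degree v : ℕ) : ℝ) / 2 := by
      rw [← Finset.sum_div]
      norm_cast
    rw [hsum, aux_degsum G S, aux_partition G S, edgeCount]
    push_cast
    ring
  refine ⟨hmain, fun hS => ?_⟩
  have h0 : edgeCount G S = 0 := by
    subst hS
    rw [edgeCount, Finset.card_eq_zero]
    apply Finset.filter_false_of_mem
    intro e he
    rw [SimpleGraph.mem_edgeFinset] at he
    induction e with
    | _ a b =>
      intro h
      exact absurd (h a (Sym2.mem_mk_left a b)) (Finset.notMem_empty a)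
  rw [hmain, h0, hS]
  simp
end

section
/- (The maximum core is a 2-approximate densest subgraph.) Let k* = max{min_{v ∈ S} deg_S(v) : S ⊆ V, S ≠ ∅}, and let S_core ⊆ V be a nonempty set with min_{v ∈ S_core} deg_{S_core}(v) = k*. Then for every nonempty S* ⊆ V, d(S_core) ≥ (1/2)·d(S*); in particular d(S_core) is at least half the maximum density. -/
open scoped Classical

variable {V : Type*} [Fintype V]

lemma handshake (G : SimpleGraph V) (S : Finset V) :
    ∑ v ∈ S, degIn G S v = 2 * edgeCount G S := by
  classical
  have h1 : ∑ v ∈ S, degIn G S v = (S.sigma fun v => S.filter (G.Adj v)).card := by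
    rw [Finset.card_sigma]; rfl
  rw [h1, Finset.card_eq_sum_card_fiberwise
      (f := fun p : Σ _ : V, V => s(p.1, p.2))
      (t := G.edgeFinset.filter fun e => ∀ v ∈ e, v ∈ S)
      (fun p hp => by
        simp only [Finset.mem_coe, Finset.mem_sigma, Finset.mem_filter] at hp
        simp only [Finset.mem_coe, Finset.mem_filter, SimpleGraph.mem_edgeFinset, SimpleGraph.mem_edgeSet]
        refine ⟨hp.2.2, ?_⟩
        intro v hv
        rw [Sym2.mem_iff] at hv
        rcases hv with rfl | rfl
        · exact hp.1
        · exact hp.2.1)]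
  have hfib : ∀ e ∈ G.edgeFinset.filter fun e => ∀ v ∈ e, v ∈ S,
      ((S.sigma fun v => S.filter (G.Adj v)).filter
        fun p => s(p.1, p.2) = e).card = 2 := by
    intro e he
    simp only [Finset.mem_filter, SimpleGraph.mem_edgeFinset, SimpleGraph.mem_edgeSet] at he
    obtain ⟨he1, he2⟩ := he
    induction e using Sym2.ind with
    | _ a b =>
      have hab : G.Adj a b := he1
      have haS : a ∈ S := he2 a (by simp)
      have hbS : b ∈ S := he2 b (by simp)
      have hne : a ≠ b := hab.ne
      have : ((S.sigma fun v => S.filter (G.Adj v)).filter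
          fun p => s(p.1, p.2) = s(a, b)) = {⟨a, b⟩, ⟨b, a⟩} := by
        ext ⟨x, y⟩
        simp only [Finset.mem_filter, Finset.mem_sigma, Finset.mem_insert,
          Finset.mem_singleton, Sym2.eq_iff, Sigma.mk.inj_iff, heq_eq_eq]
        constructor
        · rintro ⟨-, h⟩
          rcases h with ⟨rfl, rfl⟩ | ⟨rfl, rfl⟩ <;> simp
        · rintro (⟨rfl, rfl⟩ | ⟨rfl, rfl⟩) <;>
            simp [haS, hbS, hab, hab.symm]
      rw [this, Finset.card_insert_of_notMem, Finset.card_singleton]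
      simp [hne]
  rw [Finset.sum_congr rfl hfib, Finset.sum_const, smul_eq_mul, edgeCount, mul_comm]

lemma edgeCount_erase (G : SimpleGraph V) (S : Finset V) (v : V) (hvS : v ∈ S) :
    edgeCount G S = edgeCount G (S.erase v) + degIn G S v := by
  classical
  set A := G.edgeFinset.filter (fun e => ∀ x ∈ e, x ∈ S) with hA
  have hsplit : (A.filter fun e => v ∉ e).card + (A.filter fun e => v ∈ e).card = A.card := by
    rw [add_comm]
    exact Finset.card_filter_add_card_filter_not _
  have h1 : A.filter (fun e => v ∉ e) =
      G.edgeFinset.filter (fun e => ∀ x ∈ e, x ∈ S.erase v) := by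
    ext e
    induction e using Sym2.ind with
    | _ a b =>
      simp only [hA, Finset.mem_filter, Finset.filter_filter, Finset.mem_erase,
        Sym2.mem_iff]
      constructor
      · rintro ⟨he, hm, hv⟩
        refine ⟨he, fun x hx => ⟨?_, hm x hx⟩⟩
        rintro rfl
        exact hv hx
      · rintro ⟨he, hm⟩
        exact ⟨he, fun x hx => (hm x hx).2, fun hv => (hm v hv).1 rfl⟩
  have h2 : (A.filter fun e => v ∈ e).card = degIn G S v := by
    rw [degIn]
    refine (Finset.card_bij (fun u _ => s(v, u)) ?_ ?_ ?_).symm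
    · intro u hu
      simp only [Finset.mem_filter] at hu
      simp only [hA, Finset.mem_filter, SimpleGraph.mem_edgeFinset, SimpleGraph.mem_edgeSet,
        Sym2.mem_iff]
      refine ⟨⟨hu.2, ?_⟩, by simp⟩
      rintro x (rfl | rfl)
      · exact hvS
      · exact hu.1
    · intro u1 h1 u2 h2 h
      exact (Sym2.congr_right).1 h
    · intro e he
      simp only [hA, Finset.mem_filter, SimpleGraph.mem_edgeFinset,
        SimpleGraph.mem_edgeSet] at he
      obtain ⟨⟨hadj, hm⟩, hv⟩ := he
      induction e using Sym2.ind with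
      | _ a b =>
        rw [Sym2.mem_iff] at hv
        rcases hv with rfl | rfl
        · exact ⟨b, Finset.mem_filter.2 ⟨hm b (by simp), hadj⟩, rfl⟩
        · exact ⟨a, Finset.mem_filter.2 ⟨hm a (by simp), hadj.symm⟩, Sym2.eq_swap⟩
  rw [edgeCount, ← hA, ← hsplit, h1, h2, edgeCount]

lemma peel (G : SimpleGraph V) (S : Finset V) :
    ∀ _ : S.Nonempty, ∃ T : Finset V, ∃ hT : T.Nonempty,
      density G S ≤ ((T.inf' hT (degIn G T) : ℕ) : ℝ) := by
  induction S using Finset.strongInduction with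
  | _ S ih =>
    intro hS
    by_cases hcase : density G S ≤ ((S.inf' hS (degIn G S) : ℕ) : ℝ)
    · exact ⟨S, hS, hcase⟩
    push_neg at hcase
    obtain ⟨v, hv, hveq⟩ := Finset.exists_mem_eq_inf' hS (degIn G S)
    rw [hveq] at hcase
    have hS2 : 1 < S.card := by
      by_contra h
      push_neg at h
      have h1 : S.card = 1 := le_antisymm h (Finset.card_pos.mpr hS)
      obtain ⟨w, hw⟩ := Finset.card_eq_one.mp h1
      subst hw
      have hz : edgeCount G {w} = 0 := by
        rw [edgeCount, Finset.card_eq_zero, Finset.filter_eq_empty_iff]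
        intro e he
        induction e using Sym2.ind with
        | _ a b =>
          intro hall
          have ha := hall a (by simp)
          have hb := hall b (by simp)
          simp only [Finset.mem_singleton] at ha hb
          have hadj : G.Adj a b := by simpa using he
          exact hadj.ne (ha.trans hb.symm)
      rw [density, hz] at hcase
      simp at hcase
      exact absurd hcase (not_lt.mpr (by positivity))
    have hS' : (S.erase v).Nonempty := by
      rw [← Finset.card_pos, Finset.card_erase_of_mem hv]; omega
    have hcount := edgeCount_erase G S v hv
    have hdens : density G S ≤ density G (S.erase v) := by
      have hn : (1 : ℝ) < (S.card : ℝ) := by exact_mod_cast hS2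
      have hcard' : ((S.erase v).card : ℝ) = (S.card : ℝ) - 1 := by
        rw [Finset.card_erase_of_mem hv]
        push_cast [Nat.cast_sub (by omega : 1 ≤ S.card)]
        ring
      have hE : (edgeCount G S : ℝ) = (edgeCount G (S.erase v) : ℝ) + (degIn G S v : ℝ) := by
        exact_mod_cast congrArg (Nat.cast : ℕ → ℝ) hcount
      rw [density, density, hcard']
      rw [density] at hcase
      rw [div_le_div_iff₀ (by linarith) (by linarith)]
      have h2 : (degIn G S v : ℝ) * (S.card : ℝ) < (edgeCount G S : ℝ) :=
        (lt_div_iff₀ (by linarith : (0:ℝ) < (S.card:ℝ))).mp hcase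
      nlinarith [hE, h2]
    obtain ⟨T, hT, hle⟩ := ih (S.erase v) (Finset.erase_ssubset hv) hS'
    exact ⟨T, hT, hdens.trans hle⟩

/-- The maximum core is a 2-approximate densest subgraph: if `S_core` attains the maximum
value `k*` of the minimum induced degree, then `d(S_core) ≥ (1/2)·d(S*)` for every
nonempty `S*`. -/
theorem max_core_two_approx (G : SimpleGraph V) (kstar : ℕ)
    (hk : IsGreatest
      {k : ℕ | ∃ (S : Finset V) (hS : S.Nonempty), S.inf' hS (degIn G S) = k} kstar)
    (Score : Finset V) (hcore : Score.Nonempty)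
    (hmin : Score.inf' hcore (degIn G Score) = kstar) :
    ∀ Sstar : Finset V, Sstar.Nonempty →
      (1 / 2) * density G Sstar ≤ density G Score := by
  intro Sstar hstar
  -- upper bound: density Sstar ≤ kstar
  have hub : density G Sstar ≤ (kstar : ℝ) := by
    obtain ⟨T, hT, hle⟩ := peel G Sstar hstar
    have hmem : T.inf' hT (degIn G T) ≤ kstar := hk.2 ⟨T, hT, rfl⟩
    exact hle.trans (by exact_mod_cast hmem)
  -- lower bound: kstar/2 ≤ density Score
  have hdeg : ∀ v ∈ Score, kstar ≤ degIn G Score v := by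
    intro v hv
    rw [← hmin]
    exact Finset.inf'_le _ hv
  have hsum : Score.card * kstar ≤ 2 * edgeCount G Score := by
    rw [← handshake]
    calc Score.card * kstar = ∑ _v ∈ Score, kstar := by
          rw [Finset.sum_const, smul_eq_mul]
      _ ≤ ∑ v ∈ Score, degIn G Score v := Finset.sum_le_sum hdeg
  have hpos : (0 : ℝ) < (Score.card : ℝ) := by
    exact_mod_cast Finset.card_pos.mpr hcore
  have hlb : (kstar : ℝ) / 2 ≤ density G Score := by
    rw [density, div_le_div_iff₀ (by norm_num) hpos]
    have : (Score.card : ℝ) * (kstar : ℝ) ≤ 2 * (edgeCount G Score : ℝ) := by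
      exact_mod_cast hsum
    linarith
  linarith
end

section
/- (Rounding lemma underlying Charikar's LP-based exact algorithm.) Let y : V → ℝ be nonnegative with ∑_{v ∈ V} y_v = 1, and let M = max_{v ∈ V} y_v. Then there exists r ∈ (0, M] such that S(r) = {v ∈ V : y_v ≥ r} is nonempty and d(S(r)) ≥ ∑_{e = {u,v} ∈ E} min(y_u, y_v). -/
open scoped Classical

variable {V : Type*} [Fintype V]

/-- The predecessor of `t` in the finite threshold set `ts` (with default `0`). -/
noncomputable def predT (ts : Finset ℝ) (t : ℝ) : ℝ :=
  WithBot.unbotD 0 ((ts.filter (· < t)).max)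

lemma predT_spec {ts : Finset ℝ} {t : ℝ} (h0 : (0:ℝ) ∈ ts) (ht : 0 < t) :
    predT ts t ∈ ts ∧ predT ts t < t ∧ 0 ≤ predT ts t ∧
      ∀ s ∈ ts, s < t → s ≤ predT ts t := by
  have hne : (ts.filter (· < t)).Nonempty := ⟨0, Finset.mem_filter.2 ⟨h0, ht⟩⟩
  obtain ⟨m, hm⟩ := Finset.max_of_nonempty hne
  have hmm : m ∈ ts.filter (· < t) := Finset.mem_of_max hm
  have hpred : predT ts t = m := by simp [predT, hm]
  rw [hpred]
  have h0f : (0:ℝ) ∈ ts.filter (· < t) := Finset.mem_filter.2 ⟨h0, ht⟩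
  refine ⟨(Finset.mem_filter.1 hmm).1, (Finset.mem_filter.1 hmm).2, ?_, ?_⟩
  · exact Finset.le_max_of_eq h0f hm
  · intro s hs hst
    have hsf : s ∈ ts.filter (· < t) := Finset.mem_filter.2 ⟨hs, hst⟩
    exact Finset.le_max_of_eq hsf hm

/-- Telescoping: summing the gaps `t - predT ts t` over thresholds `0 < t ≤ a` gives `a`. -/
lemma teleT (ts : Finset ℝ) (h0 : (0:ℝ) ∈ ts) :
    ∀ n a, a ∈ ts → 0 ≤ a → (ts.filter (fun t => 0 < t ∧ t ≤ a)).card ≤ n →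
      ∑ t ∈ ts.filter (fun t => 0 < t ∧ t ≤ a), (t - predT ts t) = a := by
  intro n
  induction n with
  | zero =>
    intro a ha ha0 hcard
    rcases eq_or_lt_of_le ha0 with h | h
    · have hempty : ts.filter (fun t => 0 < t ∧ t ≤ a) = ∅ :=
        Finset.filter_false_of_mem (by
          intro t _ ht; rcases ht with ⟨h1, h2⟩; rw [← h] at h2; linarith)
      rw [hempty, Finset.sum_empty, ← h]
    · exfalso
      have : a ∈ ts.filter (fun t => 0 < t ∧ t ≤ a) :=
        Finset.mem_filter.2 ⟨ha, h, le_refl a⟩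
      have := Finset.card_pos.2 ⟨a, this⟩
      omega
  | succ n ih =>
    intro a ha ha0 hcard
    rcases eq_or_lt_of_le ha0 with h | h
    · have hempty : ts.filter (fun t => 0 < t ∧ t ≤ a) = ∅ :=
        Finset.filter_false_of_mem (by
          intro t _ ht; rcases ht with ⟨h1, h2⟩; rw [← h] at h2; linarith)
      rw [hempty, Finset.sum_empty, ← h]
    · obtain ⟨hbmem, hblt, hb0, hbmax⟩ := predT_spec h0 h
      set b := predT ts a with hbdef
      have hsplit : ts.filter (fun t => 0 < t ∧ t ≤ a)
          = insert a (ts.filter (fun t => 0 < t ∧ t ≤ b)) := by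
        ext t
        simp only [Finset.mem_insert, Finset.mem_filter]
        constructor
        · rintro ⟨hts, ht0, hta⟩
          rcases eq_or_lt_of_le hta with h1 | h1
          · exact Or.inl h1
          · exact Or.inr ⟨hts, ht0, hbmax t hts h1⟩
        · rintro (rfl | ⟨hts, ht0, htb⟩)
          · exact ⟨ha, h, le_rfl⟩
          · exact ⟨hts, ht0, le_trans htb (le_of_lt hblt)⟩
      have hanotin : a ∉ ts.filter (fun t => 0 < t ∧ t ≤ b) := by
        simp only [Finset.mem_filter]
        rintro ⟨-, -, hab⟩; linarith
      have hcard' : (ts.filter (fun t => 0 < t ∧ t ≤ b)).card ≤ n := by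
        rw [hsplit, Finset.card_insert_of_notMem hanotin] at hcard
        omega
      rw [hsplit, Finset.sum_insert hanotin, ih b hbmem hb0 hcard']
      ring

/-- Rounding lemma underlying Charikar's LP-based exact algorithm: if `y` is nonnegative
with `∑ y = 1` and maximum `M`, there is `r ∈ (0, M]` with `S(r) = {v : y v ≥ r}` nonempty
and `d(S(r)) ≥ ∑_{e={u,v} ∈ E} min(y u, y v)`. -/
theorem charikar_rounding [Nonempty V] (G : SimpleGraph V)
    (y : V → ℝ) (hy : ∀ v, 0 ≤ y v) (hsum : ∑ v, y v = 1) :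
    ∃ r ∈ Set.Ioc (0:ℝ) (Finset.univ.sup' Finset.univ_nonempty y),
      (Finset.univ.filter (fun v => r ≤ y v)).Nonempty ∧
      density G (Finset.univ.filter (fun v => r ≤ y v)) ≥
        ∑ e ∈ G.edgeFinset,
          Sym2.lift ⟨fun u v => min (y u) (y v), fun u v => min_comm (y u) (y v)⟩ e := by
  classical
  set M := Finset.univ.sup' Finset.univ_nonempty y with hMdef
  set ts : Finset ℝ := insert 0 (Finset.univ.image y) with htsdef
  have h0ts : (0:ℝ) ∈ ts := Finset.mem_insert_self 0 _
  have hyts : ∀ v, y v ∈ ts := fun v =>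
    Finset.mem_insert_of_mem (Finset.mem_image_of_mem y (Finset.mem_univ v))
  set P : Finset ℝ := ts.filter (fun t => 0 < t) with hPdef
  set S : ℝ → Finset V := fun r => Finset.univ.filter (fun v => r ≤ y v) with hSdef
  set Δ : ℝ → ℝ := fun t => t - predT ts t with hΔdef
  have hΔ0 : ∀ t ∈ P, 0 ≤ Δ t := by
    intro t ht
    obtain ⟨-, hlt, -, -⟩ := predT_spec h0ts (Finset.mem_filter.1 ht).2
    simp only [hΔdef]; linarith
  -- key layer-cake identity
  have key : ∀ a : ℝ, a ∈ ts → 0 ≤ a →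
      ∑ t ∈ P, (if t ≤ a then Δ t else 0) = a := by
    intro a ha ha0
    have h1 : P.filter (fun t => t ≤ a) = ts.filter (fun t => 0 < t ∧ t ≤ a) := by
      rw [hPdef, Finset.filter_filter]
    rw [← Finset.sum_filter, h1]
    exact teleT ts h0ts _ a ha ha0 le_rfl
  -- vertex identity
  have h1 : ∑ t ∈ P, Δ t * ((S t).card : ℝ) = 1 := by
    have : ∀ t ∈ P, Δ t * ((S t).card : ℝ) = ∑ v, (if t ≤ y v then Δ t else 0) := by
      intro t _
      rw [Finset.sum_ite, Finset.sum_const, Finset.sum_const]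
      simp [hSdef, mul_comm]
    rw [Finset.sum_congr rfl this, Finset.sum_comm]
    rw [← hsum]
    exact Finset.sum_congr rfl fun v _ => key (y v) (hyts v) (hy v)
  -- the min function on edges
  set f : Sym2 V → ℝ :=
    Sym2.lift ⟨fun u v => min (y u) (y v), fun u v => min_comm (y u) (y v)⟩ with hfdef
  have hfts : ∀ e : Sym2 V, f e ∈ ts ∧ 0 ≤ f e := by
    intro e
    induction e using Sym2.ind with
    | _ u v =>
      rcases min_cases (y u) (y v) with ⟨h, -⟩ | ⟨h, -⟩ <;>
        simp only [hfdef, Sym2.lift_mk, h] <;> exact ⟨hyts _, hy _⟩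
  have hiff : ∀ t : ℝ, ∀ e ∈ G.edgeFinset, (∀ v ∈ e, v ∈ S t) ↔ t ≤ f e := by
    intro t e _
    induction e using Sym2.ind with
    | _ u v =>
      simp only [hfdef, Sym2.lift_mk, hSdef, Finset.mem_filter, Finset.mem_univ, true_and,
        Sym2.mem_iff, le_min_iff]
      constructor
      · intro h; exact ⟨h u (Or.inl rfl), h v (Or.inr rfl)⟩
      · rintro ⟨hu0, hv0⟩ w hw; rcases hw with rfl | rfl; exacts [hu0, hv0]
  -- edge identity
  have h2 : ∑ t ∈ P, Δ t * ((edgeCount G (S t) : ℝ)) = ∑ e ∈ G.edgeFinset, f e := by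
    have hec : ∀ t ∈ P, Δ t * ((edgeCount G (S t)) : ℝ)
        = ∑ e ∈ G.edgeFinset, (if t ≤ f e then Δ t else 0) := by
      intro t _
      rw [Finset.sum_ite, Finset.sum_const, Finset.sum_const]
      have : G.edgeFinset.filter (fun e => t ≤ f e)
          = G.edgeFinset.filter (fun e => ∀ v ∈ e, v ∈ S t) :=
        Finset.filter_congr fun e he => (hiff t e he).symm
      simp [edgeCount, this, mul_comm]
    rw [Finset.sum_congr rfl hec, Finset.sum_comm]
    exact Finset.sum_congr rfl fun e _ => key (f e) (hfts e).1 (hfts e).2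
  -- positivity of M and nonemptiness of P
  have hMpos : 0 < M := by
    by_contra h
    push_neg at h
    have hz : ∀ v, y v = 0 := fun v =>
      le_antisymm (le_trans (Finset.le_sup' y (Finset.mem_univ v)) h) (hy v)
    simp [hz] at hsum
  obtain ⟨vM, -, hvM⟩ := Finset.exists_mem_eq_sup' Finset.univ_nonempty y
  have hMts : M ∈ ts := by rw [hMdef, hvM]; exact hyts vM
  have hPne : P.Nonempty := ⟨M, Finset.mem_filter.2 ⟨hMts, hMpos⟩⟩
  -- S t is nonempty for t ∈ P, and t ≤ M
  have hSP : ∀ t ∈ P, (S t).Nonempty ∧ t ≤ M := by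
    intro t ht
    obtain ⟨hts, ht0⟩ := Finset.mem_filter.1 ht
    have : t ∈ Finset.univ.image y := by
      rcases Finset.mem_insert.1 hts with h | h
      · exact absurd h (by linarith)
      · exact h
    obtain ⟨v, -, hv⟩ := Finset.mem_image.1 this
    refine ⟨⟨v, Finset.mem_filter.2 ⟨Finset.mem_univ v, le_of_eq hv.symm⟩⟩, ?_⟩
    rw [← hv, hMdef]
    exact Finset.le_sup' y (Finset.mem_univ v)
  -- pick the threshold with maximum density
  obtain ⟨r, hrP, hrmax⟩ := Finset.exists_max_image P (fun t => density G (S t)) hPne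
  refine ⟨r, ⟨(Finset.mem_filter.1 hrP).2, (hSP r hrP).2⟩, (hSP r hrP).1, ?_⟩
  have hub : ∑ e ∈ G.edgeFinset, f e ≤ density G (S r) := by
    calc ∑ e ∈ G.edgeFinset, f e = ∑ t ∈ P, Δ t * ((edgeCount G (S t) : ℝ)) := h2.symm
    _ ≤ ∑ t ∈ P, Δ t * (density G (S r) * ((S t).card : ℝ)) := by
        refine Finset.sum_le_sum fun t ht => ?_
        refine mul_le_mul_of_nonneg_left ?_ (hΔ0 t ht)
        have hcard : (0:ℝ) < ((S t).card : ℝ) := by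
          exact_mod_cast Finset.card_pos.2 (hSP t ht).1
        have hden : density G (S t) ≤ density G (S r) := hrmax t ht
        have : (edgeCount G (S t) : ℝ) = density G (S t) * ((S t).card : ℝ) := by
          rw [density, div_mul_cancel₀ _ hcard.ne']
        rw [this]
        exact mul_le_mul_of_nonneg_right hden (le_of_lt hcard)
    _ = density G (S r) * ∑ t ∈ P, Δ t * ((S t).card : ℝ) := by
        rw [Finset.mul_sum]; exact Finset.sum_congr rfl fun t _ => by ring
    _ = density G (S r) := by rw [h1, mul_one]
  exact hub
end

section
/- (Correctness of Charikar's LP-based exact algorithm.) Let (x*, y*) be a feasible solution of Charikar's LP that maximizes the objective ∑_{e ∈ E} x_e over all feasible solutions, and let y*_max = max_{v ∈ V} y*_v. Then there exists r ∈ (0, y*_max] such that S(r) = {v ∈ V : y*_v ≥ r} is nonempty and d(S(r)) = max{d(S) : S ⊆ V, S ≠ ∅}; that is, the set S(r*) maximizing d(S(r)) over r is a densest subgraph of G. -/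
open scoped Classical

variable {V : Type*} [Fintype V]

/-- max of B with 0 adjoined -/
noncomputable def mx0 (B : Finset ℝ) : ℝ :=
  (insert (0:ℝ) B).max' (Finset.insert_nonempty _ _)

/-- predecessor of r in B (with 0 adjoined) -/
noncomputable def predv (B : Finset ℝ) (r : ℝ) : ℝ :=
  mx0 (B.filter (fun s => s < r))

lemma mx0_eq (a : ℝ) (s : Finset ℝ) (ha : 0 ≤ a) (h : ∀ x ∈ s, x ≤ a) :
    mx0 (insert a s) = a := by
  apply le_antisymm
  · apply Finset.max'_le
    intro b hb
    simp only [Finset.mem_insert] at hb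
    rcases hb with rfl | hb
    · exact ha
    · rcases hb with rfl | hb
      · exact le_rfl
      · exact h b hb
  · exact Finset.le_max' _ _ (by simp)

lemma predv_lt (B : Finset ℝ) (r : ℝ) (hr : 0 < r) : predv B r < r := by
  unfold predv mx0
  rw [Finset.max'_lt_iff]
  intro b hb
  simp only [Finset.mem_insert, Finset.mem_filter] at hb
  rcases hb with rfl | hb
  · exact hr
  · exact hb.2

lemma predv_nonneg (B : Finset ℝ) (r : ℝ) : 0 ≤ predv B r :=
  Finset.le_max' _ _ (by simp)

lemma telescope (B : Finset ℝ) (hB : ∀ r ∈ B, 0 ≤ r) :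
    ∑ r ∈ B, (r - predv B r) = mx0 B := by
  induction B using Finset.induction_on_max with
  | empty => simp [mx0]
  | insert a s ha ih =>
    have has : a ∉ s := fun h => lt_irrefl a (ha a h)
    have ha0 : 0 ≤ a := hB a (Finset.mem_insert_self _ _)
    have hs0 : ∀ r ∈ s, 0 ≤ r := fun r hr => hB r (Finset.mem_insert_of_mem hr)
    rw [Finset.sum_insert has]
    have h1 : predv (insert a s) a = mx0 s := by
      unfold predv
      congr 1
      rw [Finset.filter_insert]
      rw [if_neg (lt_irrefl a)]
      rw [Finset.filter_true_of_mem (fun x hx => ha x hx)]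
    have h2 : ∀ r ∈ s, predv (insert a s) r = predv s r := by
      intro r hr
      unfold predv
      congr 1
      rw [Finset.filter_insert, if_neg (not_lt.2 (ha r hr).le)]
    rw [h1, Finset.sum_congr rfl (fun r hr => by rw [h2 r hr]), ih hs0]
    rw [mx0_eq a s ha0 (fun x hx => (ha x hx).le)]
    ring

lemma partial_telescope (A : Finset ℝ) (hA : ∀ r ∈ A, 0 < r) (c : ℝ)
    (hc : c = 0 ∨ c ∈ A) :
    ∑ r ∈ A.filter (fun s => s ≤ c), (r - predv A r) = c := by
  set B := A.filter (fun s => s ≤ c) with hB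
  have hpred : ∀ r ∈ B, predv A r = predv B r := by
    intro r hr
    simp only [hB, Finset.mem_filter] at hr
    unfold predv
    congr 1
    ext s
    simp only [hB, Finset.mem_filter]
    constructor
    · intro ⟨h1, h2⟩; exact ⟨⟨h1, h2.le.trans hr.2⟩, h2⟩
    · intro ⟨⟨h1, _⟩, h2⟩; exact ⟨h1, h2⟩
  rw [Finset.sum_congr rfl (fun r hr => by rw [hpred r hr])]
  have hB0 : ∀ r ∈ B, (0:ℝ) ≤ r := fun r hr =>
    (hA r (Finset.mem_filter.1 hr).1).le
  rw [telescope B hB0]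
  rcases hc with rfl | hc
  · have : B = ∅ := by
      rw [Finset.eq_empty_iff_forall_notMem]
      intro r hr
      simp only [hB, Finset.mem_filter] at hr
      exact absurd hr.2 (not_le.2 (hA r hr.1))
    simp [this, mx0, Finset.max']
  · have hcB : c ∈ B := by simp [hB, hc]
    have : insert c B = B := Finset.insert_eq_self.2 hcB
    rw [← this] at *
    exact mx0_eq c B (hA c hc).le (fun x hx => (Finset.mem_filter.1 hx).2)

/-- Any density is at most the LP optimum. -/
lemma density_le_lp (G : SimpleGraph V)
    (x : Sym2 V → ℝ) (y : V → ℝ)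
    (hopt : ∀ (x' : Sym2 V → ℝ) (y' : V → ℝ),
      (∀ e ∈ G.edgeFinset, ∀ v ∈ e, x' e ≤ y' v) →
      (∑ v, y' v = 1) →
      (∀ e ∈ G.edgeFinset, 0 ≤ x' e) →
      (∀ v, 0 ≤ y' v) →
      ∑ e ∈ G.edgeFinset, x' e ≤ ∑ e ∈ G.edgeFinset, x e)
    (T : Finset V) (hT : T.Nonempty) :
    density G T ≤ ∑ e ∈ G.edgeFinset, x e := by
  have hc : (0:ℝ) < (T.card : ℝ) := by exact_mod_cast Finset.card_pos.2 hT
  set c : ℝ := ((T.card : ℝ))⁻¹ with hcdef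
  have hc0 : 0 ≤ c := by positivity
  set x' : Sym2 V → ℝ := fun e => if ∀ v ∈ e, v ∈ T then c else 0 with hx'
  set y' : V → ℝ := fun v => if v ∈ T then c else 0 with hy'
  have hfeas : ∀ e ∈ G.edgeFinset, ∀ v ∈ e, x' e ≤ y' v := by
    intro e he v hv
    simp only [hx', hy']
    by_cases h : ∀ w ∈ e, w ∈ T
    · rw [if_pos h, if_pos (h v hv)]
    · rw [if_neg h]
      split <;> [exact hc0; exact le_rfl]
  have hsum : ∑ v, y' v = 1 := by
    simp only [hy']
    rw [Finset.sum_ite_mem, Finset.univ_inter, Finset.sum_const, nsmul_eq_mul,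
      hcdef, mul_inv_cancel₀ hc.ne']
  have hobj : ∑ e ∈ G.edgeFinset, x' e = density G T := by
    simp only [hx']
    rw [Finset.sum_ite, Finset.sum_const, Finset.sum_const_zero, add_zero,
      nsmul_eq_mul]
    rw [density, edgeCount, hcdef, div_eq_mul_inv]
  calc density G T = ∑ e ∈ G.edgeFinset, x' e := hobj.symm
    _ ≤ ∑ e ∈ G.edgeFinset, x e := by
        refine hopt x' y' hfeas hsum ?_ ?_
        · intro e _; simp only [hx']; split <;> [exact hc0; exact le_rfl]
        · intro v; simp only [hy']; split <;> [exact hc0; exact le_rfl]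

/-- Correctness of Charikar's LP-based exact algorithm: from an optimal LP solution
`(x*, y*)`, some threshold set `S(r)` with `r ∈ (0, y*_max]` is a densest subgraph. -/
theorem charikar_lp_exact [Nonempty V] (G : SimpleGraph V)
    (x : Sym2 V → ℝ) (y : V → ℝ)
    (hxy : ∀ e ∈ G.edgeFinset, ∀ v ∈ e, x e ≤ y v)
    (hysum : ∑ v, y v = 1)
    (hx : ∀ e ∈ G.edgeFinset, 0 ≤ x e)
    (hy : ∀ v, 0 ≤ y v)
    (hopt : ∀ (x' : Sym2 V → ℝ) (y' : V → ℝ),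
      (∀ e ∈ G.edgeFinset, ∀ v ∈ e, x' e ≤ y' v) →
      (∑ v, y' v = 1) →
      (∀ e ∈ G.edgeFinset, 0 ≤ x' e) →
      (∀ v, 0 ≤ y' v) →
      ∑ e ∈ G.edgeFinset, x' e ≤ ∑ e ∈ G.edgeFinset, x e) :
    ∃ r ∈ Set.Ioc (0:ℝ) (Finset.univ.sup' Finset.univ_nonempty y),
      (Finset.univ.filter (fun v => r ≤ y v)).Nonempty ∧
      IsGreatest {d : ℝ | ∃ T : Finset V, T.Nonempty ∧ density G T = d}
        (density G (Finset.univ.filter (fun v => r ≤ y v))) := by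
  set L : ℝ := ∑ e ∈ G.edgeFinset, x e with hL
  set A : Finset ℝ := (Finset.univ.image y).filter (fun r => 0 < r) with hA
  have hApos : ∀ r ∈ A, 0 < r := fun r hr => (Finset.mem_filter.1 hr).2
  set S : ℝ → Finset V := fun r => Finset.univ.filter (fun v => r ≤ y v) with hS
  -- S r is nonempty for r ∈ A
  have hSne : ∀ r ∈ A, (S r).Nonempty := by
    intro r hr
    simp only [hA, Finset.mem_filter, Finset.mem_image] at hr
    obtain ⟨⟨v, _, hv⟩, _⟩ := hr
    exact ⟨v, Finset.mem_filter.2 ⟨Finset.mem_univ v, hv.ge⟩⟩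
  -- A is nonempty
  have hAne : A.Nonempty := by
    by_contra h
    rw [Finset.not_nonempty_iff_eq_empty] at h
    have : ∀ v, y v = 0 := by
      intro v
      by_contra hv
      have hpos : 0 < y v := lt_of_le_of_ne (hy v) (Ne.symm hv)
      have : y v ∈ A := by simp [hA, hpos]
      simp [h] at this
    rw [Finset.sum_congr rfl (fun v _ => this v)] at hysum
    simp at hysum
  -- gap weights
  set g : ℝ → ℝ := fun r => r - predv A r with hg
  have hgpos : ∀ r ∈ A, 0 < g r := fun r hr =>
    sub_pos.2 (predv_lt A r (hApos r hr))
  -- Identity 1: ∑_{r ∈ A} g r * |S r| = 1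
  have hId1 : ∑ r ∈ A, g r * ((S r).card : ℝ) = 1 := by
    have hcard : ∀ r, ((S r).card : ℝ) = ∑ v, if r ≤ y v then (1:ℝ) else 0 := by
      intro r
      rw [Finset.sum_boole]
    calc ∑ r ∈ A, g r * ((S r).card : ℝ)
        = ∑ r ∈ A, ∑ v, (if r ≤ y v then g r else 0) := by
          refine Finset.sum_congr rfl (fun r _ => ?_)
          rw [hcard, Finset.mul_sum]
          exact Finset.sum_congr rfl (fun v _ => by split <;> simp
          )
      _ = ∑ v, ∑ r ∈ A, (if r ≤ y v then g r else 0) := Finset.sum_comm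
      _ = ∑ v, y v := by
          refine Finset.sum_congr rfl (fun v _ => ?_)
          rw [← Finset.sum_filter]
          apply partial_telescope A hApos
          rcases eq_or_lt_of_le (hy v) with h | h
          · exact Or.inl h.symm
          · exact Or.inr (by simp [hA, h])
      _ = 1 := hysum
  -- Identity 2: L ≤ ∑_{r ∈ A} g r * e[S r]
  have hId2 : L ≤ ∑ r ∈ A, g r * (edgeCount G (S r) : ℝ) := by
    have hfe : ∀ r, G.edgeFinset.filter (fun e => ∀ v ∈ e, v ∈ S r)
        = G.edgeFinset.filter (fun e => ∀ v ∈ e, r ≤ y v) := by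
      intro r
      apply Finset.filter_congr
      intro e _
      constructor
      · intro h v hv
        exact (Finset.mem_filter.1 (h v hv)).2
      · intro h v hv
        exact Finset.mem_filter.2 ⟨Finset.mem_univ v, h v hv⟩
    have hcount : ∀ r, (edgeCount G (S r) : ℝ)
        = ∑ e ∈ G.edgeFinset, if ∀ v ∈ e, r ≤ y v then (1:ℝ) else 0 := by
      intro r
      rw [Finset.sum_boole, edgeCount, hfe r]
    calc L = ∑ e ∈ G.edgeFinset, x e := hL
      _ ≤ ∑ e ∈ G.edgeFinset, ∑ r ∈ A, (if ∀ v ∈ e, r ≤ y v then g r else 0) := by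
          apply Finset.sum_le_sum
          intro e he
          -- find c = min over endpoints
          obtain ⟨c, hcyv, hcA, hxc⟩ :
              ∃ c, (∀ r, (∀ v ∈ e, r ≤ y v) ↔ r ≤ c) ∧ (c = 0 ∨ c ∈ A) ∧ x e ≤ c := by
            induction e using Sym2.inductionOn with
            | hf u w =>
              refine ⟨min (y u) (y w), ?_, ?_, ?_⟩
              · intro r
                simp only [Sym2.mem_iff, le_min_iff]
                constructor
                · intro h; exact ⟨h u (Or.inl rfl), h w (Or.inr rfl)⟩
                · rintro ⟨h1, h2⟩ v (rfl | rfl) <;> assumption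
              · rcases eq_or_lt_of_le (le_min (hy u) (hy w)) with h | h
                · exact Or.inl h.symm
                · refine Or.inr ?_
                  simp only [hA, Finset.mem_filter, Finset.mem_image]
                  refine ⟨?_, h⟩
                  rcases min_choice (y u) (y w) with h' | h' <;>
                    [exact ⟨u, Finset.mem_univ u, h'.symm⟩;
                     exact ⟨w, Finset.mem_univ w, h'.symm⟩]
              · rw [le_min_iff]
                exact ⟨hxy _ he u (Sym2.mem_mk_left u w),
                  hxy _ he w (Sym2.mem_mk_right u w)⟩
          calc x e ≤ c := hxc
            _ = ∑ r ∈ A.filter (fun s => s ≤ c), g r :=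
                (partial_telescope A hApos c hcA).symm
            _ = ∑ r ∈ A, (if r ≤ c then g r else 0) := Finset.sum_filter _ _
            _ = ∑ r ∈ A, (if ∀ v ∈ e, r ≤ y v then g r else 0) :=
                Finset.sum_congr rfl (fun r _ => by simp only [hcyv r])
      _ = ∑ r ∈ A, ∑ e ∈ G.edgeFinset, (if ∀ v ∈ e, r ≤ y v then g r else 0) :=
          Finset.sum_comm
      _ = ∑ r ∈ A, g r * (edgeCount G (S r) : ℝ) := by
          refine Finset.sum_congr rfl (fun r _ => ?_)
          rw [hcount, Finset.mul_sum]
          exact Finset.sum_congr rfl (fun e _ => by split <;> simp)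
  -- Find r ∈ A with L ≤ density (S r)
  have hmain : ∃ r ∈ A, L ≤ density G (S r) := by
    by_contra h
    push_neg at h
    have hstrict : ∀ r ∈ A, g r * (edgeCount G (S r) : ℝ)
        < g r * (L * ((S r).card : ℝ)) := by
      intro r hr
      apply mul_lt_mul_of_pos_left _ (hgpos r hr)
      have hcard : (0:ℝ) < ((S r).card : ℝ) := by
        exact_mod_cast Finset.card_pos.2 (hSne r hr)
      have := h r hr
      rw [density, div_lt_iff₀ hcard] at this
      exact this
    have := Finset.sum_lt_sum_of_nonempty hAne hstrict
    have hrh : ∑ r ∈ A, g r * (L * ((S r).card : ℝ)) = L := by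
      calc ∑ r ∈ A, g r * (L * ((S r).card : ℝ))
          = L * ∑ r ∈ A, g r * ((S r).card : ℝ) := by
            rw [Finset.mul_sum]; exact Finset.sum_congr rfl (fun r _ => by ring)
        _ = L := by rw [hId1, mul_one]
    rw [hrh] at this
    exact absurd (hId2.trans_lt this) (lt_irrefl L)
  obtain ⟨r, hrA, hrd⟩ := hmain
  have hr0 : 0 < r := hApos r hrA
  refine ⟨r, ⟨hr0, ?_⟩, hSne r hrA, ⟨⟨S r, hSne r hrA, rfl⟩, ?_⟩⟩
  · simp only [hA, Finset.mem_filter, Finset.mem_image] at hrA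
    obtain ⟨⟨v, _, hv⟩, _⟩ := hrA
    rw [← hv]
    exact Finset.le_sup' y (Finset.mem_univ v)
  · rintro d ⟨T, hT, rfl⟩
    exact (density_le_lp G x y hopt T hT).trans hrd
end

section
/- (Weak duality for the dual of Charikar's LP.) Let t ∈ ℝ and, for every edge e ∈ E and endpoint v of e, let z_{e,v} ≥ 0 be such that z_{e,u} + z_{e,v} ≥ 1 for every edge e = {u, v} ∈ E, and ∑_{e ∈ E : v ∈ e} z_{e,v} ≤ t for every vertex v ∈ V. Then t ≥ d(S) for every nonempty S ⊆ V; in particular t is at least the maximum density of G. -/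
open scoped Classical

variable {V : Type*} [Fintype V]

/-- Weak duality for the dual of Charikar's LP: any feasible dual solution value `t`
is at least the density of every nonempty subset. -/
theorem charikar_dual_weak_duality (G : SimpleGraph V) (t : ℝ) (z : Sym2 V → V → ℝ)
    (hz : ∀ e ∈ G.edgeFinset, ∀ v ∈ e, 0 ≤ z e v)
    (hcov : ∀ u v : V, G.Adj u v → 1 ≤ z s(u, v) u + z s(u, v) v)
    (hdeg : ∀ v : V, ∑ e ∈ G.edgeFinset.filter (fun e => v ∈ e), z e v ≤ t) :
    ∀ S : Finset V, S.Nonempty → density G S ≤ t := by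
  intro S hS
  set ES := G.edgeFinset.filter (fun e => ∀ v ∈ e, v ∈ S) with hES
  have key : (edgeCount G S : ℝ) ≤ ∑ v ∈ S, ∑ e ∈ ES.filter (fun e => v ∈ e), z e v := by
    have h1 : (edgeCount G S : ℝ) ≤ ∑ e ∈ ES, ∑ v ∈ S.filter (fun v => v ∈ e), z e v := by
      have hb : ∀ e ∈ ES, (1:ℝ) ≤ ∑ v ∈ S.filter (fun v => v ∈ e), z e v := by
        intro e he
        simp only [hES, Finset.mem_filter, SimpleGraph.mem_edgeFinset] at he
        obtain ⟨heE, heS⟩ := he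
        induction e with
        | h u v =>
          have hadj : G.Adj u v := heE
          have hne : u ≠ v := hadj.ne
          have hfu : u ∈ S := heS u (by simp)
          have hfv : v ∈ S := heS v (by simp)
          have : S.filter (fun w => w ∈ s(u, v)) = {u, v} := by
            ext w
            simp only [Finset.mem_filter, Sym2.mem_iff, Finset.mem_insert,
              Finset.mem_singleton]
            constructor
            · rintro ⟨_, h⟩; exact h
            · rintro (rfl | rfl) <;> simp [hfu, hfv]
          rw [this, Finset.sum_pair hne]
          exact hcov u v hadj
      have := Finset.card_nsmul_le_sum ES _ 1 hb
      rw [edgeCount]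
      simpa using this
    have h2 : ∑ e ∈ ES, ∑ v ∈ S.filter (fun v => v ∈ e), z e v
        = ∑ v ∈ S, ∑ e ∈ ES.filter (fun e => v ∈ e), z e v := by
      simp only [Finset.sum_filter]
      exact Finset.sum_comm
    exact h1.trans_eq h2
  have h3 : ∀ v ∈ S, ∑ e ∈ ES.filter (fun e => v ∈ e), z e v ≤ t := by
    intro v _
    refine le_trans ?_ (hdeg v)
    apply Finset.sum_le_sum_of_subset_of_nonneg
    · intro e he
      simp only [hES, Finset.mem_filter] at he ⊢
      exact ⟨he.1.1, he.2⟩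
    · intro e he _
      simp only [Finset.mem_filter] at he
      exact hz e he.1 v he.2
  have h4 : (edgeCount G S : ℝ) ≤ S.card * t :=
    key.trans (by
      calc ∑ v ∈ S, ∑ e ∈ ES.filter (fun e => v ∈ e), z e v ≤ ∑ _v ∈ S, t :=
            Finset.sum_le_sum h3
        _ = S.card * t := by rw [Finset.sum_const, nsmul_eq_mul])
  rw [density, div_le_iff₀ (by exact_mod_cast Finset.card_pos.mpr hS)]
  linarith [h4]
end
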